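/- arXiv:1601.06519 — 2 statements merged into one kernel-verified Lean document; each statement's English description precedes it below -/
import Mathlib

section
/- Let K be a field, S a scheme of finite type over K, and S′ ⊆ S(K) a set of K-rational points that is dense in S (i.e., the set of corresponding closed points is dense). Then for every field extension L/K, the image of S′ in S_L = S ×_K Spec L is dense in S_L. -/
open AlgebraicGeometry CategoryTheory CategoryTheory.Limits


open TensorProduct

/-- Key algebra lemma: if `D` is a dense set of primes of a `K`-algebra `A` all of which are
kernels of `K`-algebra homs to `K`, then the preimage of `D` under
`Spec (A ⊗[K] L) → Spec A` is dense. -/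
theorem dense_comap_tensor (K L A : Type*) [Field K] [Field L] [CommRing A]
    [Algebra K L] [Algebra K A]
    (D : Set (PrimeSpectrum A)) (hD : Dense D)
    (hrat : ∀ z ∈ D, ∃ φ : A →ₐ[K] K, z.asIdeal = RingHom.ker φ) :
    Dense (PrimeSpectrum.comap (Algebra.TensorProduct.includeLeftRingHom :
      A →+* A ⊗[K] L) ⁻¹' D) := by
  rw [PrimeSpectrum.isTopologicalBasis_basic_opens.dense_iff]
  rintro o ⟨g, rfl⟩ ho
  -- `g` is not nilpotent
  by_contra hne
  rw [Set.not_nonempty_iff_eq_empty] at hne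
  -- for each φ, the point of Spec (A ⊗ L) given by ψφ
  have main : ∀ z ∈ D, ∀ φ : A →ₐ[K] K, z.asIdeal = RingHom.ker φ →
      (Algebra.TensorProduct.lift ((IsScalarTower.toAlgHom K K L).comp φ)
        (AlgHom.id K L) (fun _ _ => Commute.all _ _)) g = 0 := by
    intro z hz φ hφ
    set ψ := Algebra.TensorProduct.lift ((IsScalarTower.toAlgHom K K L).comp φ)
        (AlgHom.id K L) (fun _ _ => Commute.all _ _) with hψ
    by_contra hg
    have hker : (RingHom.ker ψ).IsPrime := RingHom.ker_isPrime _
    set y : PrimeSpectrum (A ⊗[K] L) := ⟨RingHom.ker ψ, hker⟩ with hy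
    have h1 : y ∈ PrimeSpectrum.basicOpen g := by
      simpa [PrimeSpectrum.mem_basicOpen, y, RingHom.mem_ker] using hg
    have h2 : PrimeSpectrum.comap (Algebra.TensorProduct.includeLeftRingHom :
        A →+* A ⊗[K] L) y = z := by
      ext a
      simp only [PrimeSpectrum.comap_asIdeal, Ideal.mem_comap, hφ, RingHom.mem_ker, y]
      show ψ (Algebra.TensorProduct.includeLeftRingHom a) = 0 ↔ φ a = 0
      have : ψ (Algebra.TensorProduct.includeLeftRingHom a) = algebraMap K L (φ a) := by
        simp [ψ, Algebra.TensorProduct.includeLeftRingHom_apply]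
      rw [this]
      constructor
      · intro h; exact (map_eq_zero_iff _ (algebraMap K L).injective).mp h
      · intro h; rw [h, map_zero]
    exact Set.eq_empty_iff_forall_notMem.mp hne y ⟨h1, by simp [Set.mem_preimage, h2, hz]⟩
  -- express `g` in terms of a basis of `L` over `K`
  classical
  let b := Module.Basis.ofVectorSpace K L
  let B := Algebra.TensorProduct.basis A b
  have hg : g = ∑ j ∈ (B.repr g).support, B.repr g j • B j := by
    conv_lhs => rw [← B.linearCombination_repr g]
    rw [Finsupp.linearCombination_apply, Finsupp.sum]
  have hcoef : ∀ j ∈ (B.repr g).support, IsNilpotent (B.repr g j) := by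
    intro j hj
    rw [nilpotent_iff_mem_prime]
    intro J hJ
    have hsub : D ⊆ PrimeSpectrum.zeroLocus {B.repr g j} := by
      intro z hz
      obtain ⟨φ, hφ⟩ := hrat z hz
      set ψ := Algebra.TensorProduct.lift ((IsScalarTower.toAlgHom K K L).comp φ)
          (AlgHom.id K L) (fun _ _ => Commute.all _ _) with hψdef
      have hψg : ψ g = 0 := main z hz φ hφ
      have hterm : ∀ j' ∈ (B.repr g).support,
          ψ (B.repr g j' • B j') = algebraMap K L (φ (B.repr g j')) * b j' := by
        intro j' _
        have : (B.repr g j') • B j' = (B.repr g j') ⊗ₜ[K] b j' :=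
          Algebra.TensorProduct.basis_repr_symm_apply' (b := b) _ _
        rw [this, hψdef, Algebra.TensorProduct.lift_tmul]
        simp
      have hsum : ∑ j' ∈ (B.repr g).support, φ (B.repr g j') • b j' = 0 := by
        have := hψg
        conv_lhs at this => rw [hg]
        rw [map_sum] at this
        rw [Finset.sum_congr rfl hterm] at this
        simpa [Algebra.smul_def] using this
      have hz0 : ∀ j' ∈ (B.repr g).support, φ (B.repr g j') = 0 :=
        linearIndependent_iff'.mp b.linearIndependent _ _ hsum
      have : B.repr g j ∈ z.asIdeal := by
        rw [hφ, RingHom.mem_ker]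
        exact hz0 j hj
      simpa [PrimeSpectrum.mem_zeroLocus, Set.singleton_subset_iff] using this
    have hcl : closure D ⊆ PrimeSpectrum.zeroLocus {B.repr g j} :=
      (PrimeSpectrum.isClosed_zeroLocus _).closure_subset_iff.mpr hsub
    rw [hD.closure_eq] at hcl
    have hJmem := hcl (Set.mem_univ (⟨J, hJ⟩ : PrimeSpectrum A))
    simpa [PrimeSpectrum.mem_zeroLocus, Set.singleton_subset_iff] using hJmem
  -- hence `g` is nilpotent
  have hnil : IsNilpotent g := by
    rw [hg]
    refine isNilpotent_sum fun j hj => ?_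
    rw [Algebra.smul_def]
    exact (Commute.all _ _).isNilpotent_mul_right
      (IsNilpotent.map (hcoef j hj) (algebraMap A (A ⊗[K] L)))
  rw [← PrimeSpectrum.basicOpen_eq_bot_iff] at hnil
  simp only [hnil] at ho
  simpa using ho

open AlgebraicGeometry CategoryTheory CategoryTheory.Limits

lemma dense_of_dense_preimage {X Y : Type*} [TopologicalSpace X] [TopologicalSpace Y]
    {f : X → Y} (hf : Continuous f) (hsurj : Function.Surjective f) {s : Set Y}
    (h : Dense (f ⁻¹' s)) : Dense s := by
  intro y
  obtain ⟨x, rfl⟩ := hsurj y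
  exact closure_mono (Set.image_preimage_subset f s)
    (image_closure_subset_closure_image hf ⟨x, h x, rfl⟩)


/-- Let `K` be a field, `S` a scheme of finite type over `K`, and `S′` a family of
`K`-rational points of `S` whose image is dense in `S`. Then for every field extension
`L/K`, the image of `S′` (i.e. the preimage of `S′` under the projection) in
`S_L = S ×_K Spec L` is dense in `S_L`. -/
theorem stmt_9 (K L : Type) [Field K] [Field L] [Algebra K L]
    (S : Scheme) (f : S ⟶ Spec (CommRingCat.of K)) [LocallyOfFiniteType f]
    [QuasiCompact f]
    (ι : Type) (σ : ι → (Spec (CommRingCat.of K) ⟶ S))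
    (hσ : ∀ i, σ i ≫ f = 𝟙 _)
    (hdense : Dense (⋃ i, Set.range (σ i).1.base)) :
    Dense ((pullback.fst f (Spec.map (CommRingCat.ofHom (algebraMap K L)))).1.base ⁻¹'
      (⋃ i, Set.range (σ i).1.base)) := by
  classical
  set g : Spec (CommRingCat.of L) ⟶ Spec (CommRingCat.of K) :=
    Spec.map (CommRingCat.ofHom (algebraMap K L)) with hgdef
  set p := pullback.fst f g with hpdef
  set q := pullback.snd f g with hqdef
  set D := ⋃ i, Set.range (σ i).1.base with hDdef
  rw [dense_iff_inter_open]
  rintro V hVopen ⟨x, hxV⟩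
  -- choose an affine chart around `p x`
  set R : CommRingCat := S.affineOpenCover.X (S.affineOpenCover.idx (p.base x)) with hRdef
  set j : Spec R ⟶ S := S.affineOpenCover.f (S.affineOpenCover.idx (p.base x)) with hjdef
  haveI : IsOpenImmersion j := S.affineOpenCover.map_prop _
  obtain ⟨s, hs⟩ : p.base x ∈ Set.range j.base := S.affineOpenCover.covers (p.base x)
  clear hjdef
  clear_value j R
  set U : S.Opens := j.opensRange with hUdef
  have hjU : Set.range j.base = (U : Set S) := rfl
  set W : (pullback f g).Opens := p ⁻¹ᵁ U with hWdef
  -- the iso `Spec R ≅ U`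
  set ε : (Spec R : Scheme) ≅ U.toScheme :=
    IsOpenImmersion.isoOfRangeEq j U.ι (by rw [hjU, Scheme.Opens.range_ι]) with hεdef
  have hε : ε.hom ≫ U.ι = j := IsOpenImmersion.isoOfRangeEq_hom_fac _ _ _
  -- the structure morphism of `R` as a `K`-algebra
  set α : CommRingCat.of K ⟶ R := Spec.preimage (j ≫ f) with hαdef
  have hα : Spec.map α = j ≫ f := Spec.map_preimage _
  letI : Algebra K ↑R := RingHom.toAlgebra α.hom
  have halg : CommRingCat.ofHom (algebraMap K ↑R) = α := rfl
  -- the pullback squares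
  have h0 := isPullback_morphismRestrict p U
  have hbig := IsPullback.of_hasPullback f g
  have h2 := h0.paste_vert hbig
  have h1 : IsPullback ((p ∣_ U) ≫ ε.inv) (W.ι ≫ q)
      (Spec.map (CommRingCat.ofHom (algebraMap K ↑R))) g := by
    refine h2.of_iso (Iso.refl _) ε.symm (Iso.refl _) (Iso.refl _) (by simp) (by rfl) ?_ (by simp)
    rw [halg, hα]
    simp only [Iso.refl_hom, Category.comp_id, Iso.symm_hom]
    rw [← hε]
    simp
  set e : (Spec (CommRingCat.of (TensorProduct K ↑R L)) : Scheme) ⟶ W.toScheme :=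
    (pullbackSpecIso K ↑R L).inv ≫ h1.isoPullback.inv with hedef
  have hcomm : e ≫ (p ∣_ U) ≫ ε.inv =
      Spec.map (CommRingCat.ofHom (Algebra.TensorProduct.includeLeftRingHom
        (A := ↑R) (B := L) (R := K))) := by
    rw [hedef, Category.assoc, h1.isoPullback_inv_fst, pullbackSpecIso_inv_fst]
  -- `x` lies in `W`
  have hxW : x ∈ W := show p.base x ∈ U from ⟨s, hs⟩
  obtain ⟨y0, hy0⟩ : ∃ y0, W.ι.base y0 = x := by
    have : x ∈ Set.range W.ι.base := by rw [Scheme.Opens.range_ι]; exact hxW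
    exact this
  -- pointwise commutation facts
  have hfun1 : ∀ y, p.base (W.ι.base y) = U.ι.base ((p ∣_ U).base y) := by
    intro y
    rw [← Scheme.Hom.comp_apply, ← Scheme.Hom.comp_apply, morphismRestrict_ι]
  have hcomm2 : e ≫ (p ∣_ U) ≫ U.ι =
      Spec.map (CommRingCat.ofHom (Algebra.TensorProduct.includeLeftRingHom
        (A := ↑R) (B := L) (R := K))) ≫ j := by
    rw [← hε, ← hcomm]
    simp
  -- rationality of the points of `j.base ⁻¹' D`
  haveI : Subsingleton ↥(Spec (CommRingCat.of K)) :=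
    inferInstanceAs (Subsingleton (PrimeSpectrum K))
  have hrat : ∀ z ∈ j.base ⁻¹' D, ∃ φ : ↑R →ₐ[K] K, z.asIdeal = RingHom.ker φ := by
    intro z hz
    rw [hDdef] at hz
    obtain ⟨i, w, hw⟩ : ∃ i w, (σ i).base w = j.base z := by
      simpa [Set.mem_iUnion] using hz
    have hrange : Set.range (σ i).base ⊆ Set.range j.base := by
      rintro _ ⟨w', rfl⟩
      have hww : w' = w := Subsingleton.elim _ _
      exact ⟨z, by rw [hww, hw]⟩
    set τ := IsOpenImmersion.lift j (σ i) hrange with hτdef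
    have hτ : τ ≫ j = σ i := IsOpenImmersion.lift_fac _ _ _
    set φc : R ⟶ CommRingCat.of K := Spec.preimage τ with hφcdef
    have hφc : Spec.map φc = τ := Spec.map_preimage _
    have hcompat : α ≫ φc = 𝟙 (CommRingCat.of K) := by
      apply Spec.map_injective
      rw [Spec.map_comp, Spec.map_id, hφc, hα, ← Category.assoc, hτ, hσ i]
    refine ⟨{ toRingHom := φc.hom, commutes' := fun k => ?_ }, ?_⟩
    · have := congrArg (fun (m : CommRingCat.of K ⟶ CommRingCat.of K) => m k) hcompat
      exact this
    · have hzτ : τ.base w = z := by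
        apply j.isOpenEmbedding.injective
        rw [← Scheme.Hom.comp_apply, hτ, hw]
      have hzw : z = (Spec.map φc).base w := by rw [hφc, hzτ]
      have hwbot : w.asIdeal = ⊥ := by
        have hall : ∀ v : PrimeSpectrum K, v.asIdeal = ⊥ := fun v => by
          haveI := v.isPrime
          exact Ideal.eq_bot_of_prime v.asIdeal
        exact hall w
      have : z.asIdeal = Ideal.comap φc.hom w.asIdeal := by rw [hzw]; rfl
      rw [this, hwbot]
      exact (RingHom.ker_eq_comap_bot _).symm
  -- density of `j.base ⁻¹' D`
  have hDR : Dense (j.base ⁻¹' D) := hdense.preimage j.isOpenEmbedding.isOpenMap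
  -- apply the algebraic key lemma
  have hkey := dense_comap_tensor K L ↑R (j.base ⁻¹' D) hDR hrat
  -- transfer density along the isomorphism `e`
  haveI : IsIso e := by rw [hedef]; infer_instance
  have hT : Dense (W.ι.base ⁻¹' (p.base ⁻¹' D)) := by
    refine dense_of_dense_preimage e.base.hom.continuous
      (Scheme.homeoOfIso (asIso e)).surjective ?_
    have hfun2 : ∀ y, p.base (W.ι.base (e.base y)) =
        j.base ((Spec.map (CommRingCat.ofHom (Algebra.TensorProduct.includeLeftRingHom
          (A := ↑R) (B := L) (R := K)))).base y) := by
      intro y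
      have hy := congrArg (fun m : ((Spec (CommRingCat.of (TensorProduct K ↑R L)) : Scheme) ⟶ S)
        => m.base y) hcomm2
      have hy2 : ∀ z, U.ι.base ((p ∣_ U).base z) = p.base (W.ι.base z) := fun z => by
        rw [← Scheme.Hom.comp_apply, ← Scheme.Hom.comp_apply, morphismRestrict_ι]
      simpa [hy2] using hy
    have : e.base ⁻¹' (W.ι.base ⁻¹' (p.base ⁻¹' D)) =
        (Spec.map (CommRingCat.ofHom (Algebra.TensorProduct.includeLeftRingHom
          (A := ↑R) (B := L) (R := K)))).base ⁻¹' (j.base ⁻¹' D) := by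
      ext y
      simp [Set.mem_preimage, hfun2 y]
    rw [this]
    exact hkey
  -- conclude
  have hV' : IsOpen (W.ι.base ⁻¹' V) := hVopen.preimage W.ι.base.hom.continuous
  have hne : (W.ι.base ⁻¹' V).Nonempty := ⟨y0, by rw [Set.mem_preimage, hy0]; exact hxV⟩
  obtain ⟨y, hyV, hyT⟩ := hT.inter_open_nonempty _ hV' hne
  exact ⟨W.ι.base y, hyV, hyT⟩
end

section
/- Let K be a field of characteristic p > 0 and let α be an element of a field extension L of K that is transcendental over K (more generally, fix a countable family (α_i) of elements of L algebraically independent over K). Define a connection-like structure on the free rank-2 module E over L[x] by letting divided-power derivations ∂_x^{(k)} act by ∂_x^{(k)}(e₁) = 0 for k > 0, and ∂_x^{(k)}(e₂) = α_i·e₁ if k = p^i and 0 otherwise. Then these formulas are compatible with the relations ∂_x^{(a)}∂_x^{(b)} = C(a+b, a)·∂_x^{(a+b)} in the ring of divided-power differential operators, where C(a+b,a) is the binomial coefficient mod p. -/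
open Polynomial

/-- The action of the divided-power derivation `∂_x^{(k)}` on the free rank-2 module
`E = L[x]·e₁ ⊕ L[x]·e₂` over `L[x]` determined (via the divided-power Leibniz rule) by
`∂_x^{(k)}(e₁) = 0` for `k > 0` and `∂_x^{(k)}(e₂) = c k · e₁`, where `c k = α_i` if
`k = p^i` and `c k = 0` otherwise. -/
noncomputable def dividedPowerAction (L : Type*) [Field L] (c : ℕ → L) (k : ℕ)
    (v : Fin 2 → Polynomial L) : Fin 2 → Polynomial L :=
  ![hasseDeriv k (v 0) + ∑ d ∈ Finset.Icc 1 k, Polynomial.C (c d) * hasseDeriv (k - d) (v 1),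
    hasseDeriv k (v 1)]

/-- Let `K` be a field of characteristic `p > 0`, `L/K` a field extension, and `(αᵢ)` a
countable family of elements of `L` algebraically independent over `K`. The formulas
`∂_x^{(k)}(e₁) = 0` (`k > 0`) and `∂_x^{(k)}(e₂) = αᵢ·e₁` if `k = pⁱ`, `0` otherwise, are
compatible with the relations `∂_x^{(a)} ∘ ∂_x^{(b)} = C(a+b, a)·∂_x^{(a+b)}` in the ring
of divided-power differential operators: the defined operators satisfy
`∂_x^{(a)}(∂_x^{(b)}(e₂)) = C(a+b, a)·∂_x^{(a+b)}(e₂)` for all `a, b > 0`. -/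
theorem stmt_18 (p : ℕ) (hp : p.Prime)
    (K L : Type*) [Field K] [Field L] [Algebra K L] [CharP K p] [CharP L p]
    (α : ℕ → L) (hα : AlgebraicIndependent K α)
    (c : ℕ → L) (hc1 : ∀ i, c (p ^ i) = α i) (hc2 : ∀ k, (∀ i, k ≠ p ^ i) → c k = 0)
    (a b : ℕ) (ha : 0 < a) (hb : 0 < b) :
    dividedPowerAction L c a (dividedPowerAction L c b ![0, 1]) =
      (a + b).choose a • dividedPowerAction L c (a + b) ![0, 1] := by
  have hsum : ∀ k, 0 < k →
      (∑ d ∈ Finset.Icc 1 k, Polynomial.C (c d) * hasseDeriv (k - d) (1 : Polynomial L))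
        = Polynomial.C (c k) := by
    intro k hk
    rw [Finset.sum_eq_single k]
    · simp
    · intro d hd hne
      have hd' := Finset.mem_Icc.mp hd
      rw [hasseDeriv_apply_one _ (by omega), mul_zero]
    · intro h
      exact absurd (Finset.mem_Icc.mpr ⟨hk, le_refl k⟩) h
  have hzero : ((a + b).choose a : L) * c (a + b) = 0 := by
    by_cases hex : ∃ i, a + b = p ^ i
    · obtain ⟨i, hi⟩ := hex
      have hdvd : p ∣ (a + b).choose a := by
        rw [hi]
        exact Nat.Prime.dvd_choose_pow hp (by omega) (by omega)
      rw [(CharP.cast_eq_zero_iff L p _).mpr hdvd, zero_mul]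
    · rw [hc2 _ (fun i hi => hex ⟨i, hi⟩), mul_zero]
  funext i
  fin_cases i
  · simp only [dividedPowerAction, Fin.zero_eta, Fin.isValue, Matrix.cons_val_zero,
      Matrix.cons_val_one, Matrix.head_cons, Pi.smul_apply,
      hsum b hb, hsum (a + b) (by omega : 0 < a + b), map_zero, zero_add, add_zero,
      mul_zero, Finset.sum_const_zero, hasseDeriv_C _ _ ha, hasseDeriv_apply_one _ hb]
    rw [nsmul_eq_mul, ← Polynomial.C_eq_natCast, ← map_mul, hzero, map_zero]
  · simp only [dividedPowerAction, Fin.mk_one, Fin.isValue, Matrix.cons_val_zero,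
      Matrix.cons_val_one, Matrix.head_cons, Pi.smul_apply, map_zero,
      hasseDeriv_apply_one _ hb, hasseDeriv_apply_one _ (by omega : 0 < a + b), smul_zero]
end
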